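/- arXiv:2104.14488 — 4 statements merged into one kernel-verified Lean document; each statement's English description precedes it below -/
import Mathlib

section
/- Let S be a commutative ring in which any two nonzero ideals have nonzero intersection (i.e., S is a uniform S-module), and suppose S is Noetherian. Then every element of S that is not nilpotent is a regular element (non-zero-divisor). -/
/-!
By the Noetherian hypothesis the chain `ann r ⊆ ann r² ⊆ ⋯` stabilises, which makes
`ann (r ^ n)` and `(r ^ n)` intersect trivially for some `n ≥ 1`. If `r` is not nilpotent the
ideal `(r ^ n)` is nonzero, so uniformity forces `ann (r ^ n) = 0`: `r ^ n`, and hence `r`,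
is a non-zero-divisor.
-/

theorem LinearMap.range_mulLeft_eq_span {R : Type*} [CommSemiring R] (a : R) :
    LinearMap.range (LinearMap.mulLeft R a) = Ideal.span {a} := by
  ext x
  simp [Ideal.mem_span_singleton', mul_comm]

theorem IsNoetherianRing.exists_pow_ne_zero_disjoint_ker_mulLeft_span {R : Type*} [CommRing R]
    [IsNoetherianRing R] (r : R) :
    ∃ n ≠ 0, Disjoint (LinearMap.ker (LinearMap.mulLeft R (r ^ n))) (Ideal.span {r ^ n}) := by
  obtain ⟨n, hdisj, hn⟩ :=
    ((Module.End.eventually_disjoint_ker_pow_range_pow (LinearMap.mulLeft R r)).and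
      (Filter.eventually_ne_atTop 0)).exists
  refine ⟨n, hn, ?_⟩
  rwa [LinearMap.pow_mulLeft, LinearMap.range_mulLeft_eq_span] at hdisj

theorem mem_nonZeroDivisors_of_ker_mulLeft_eq_bot {R : Type*} [CommSemiring R] {a : R}
    (h : LinearMap.ker (LinearMap.mulLeft R a) = ⊥) : a ∈ nonZeroDivisors R :=
  mem_nonZeroDivisors_iff_right.2 fun x hx => by
    rw [mul_comm] at hx
    exact LinearMap.ker_eq_bot'.1 h x hx

/-- In a commutative Noetherian ring in which any two nonzero ideals have nonzero
intersection, every non-nilpotent element is a non-zero-divisor. -/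
theorem stmt0 (S : Type*) [CommRing S] [IsNoetherianRing S]
    (huniform : ∀ I J : Ideal S, I ≠ ⊥ → J ≠ ⊥ → I ⊓ J ≠ ⊥)
    (r : S) (hr : ¬ IsNilpotent r) :
    r ∈ nonZeroDivisors S := by
  obtain ⟨n, hn, hdisj⟩ := IsNoetherianRing.exists_pow_ne_zero_disjoint_ker_mulLeft_span r
  have hspan : Ideal.span {r ^ n} ≠ ⊥ := by
    rw [Ne, Ideal.span_singleton_eq_bot]
    exact fun h => hr ⟨n, h⟩
  have hker : LinearMap.ker (LinearMap.mulLeft S (r ^ n)) = ⊥ := by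
    by_contra hne
    exact huniform _ _ hne hspan hdisj.eq_bot
  obtain ⟨m, rfl⟩ := Nat.exists_eq_succ_of_ne_zero hn
  have hpow := mem_nonZeroDivisors_of_ker_mulLeft_eq_bot hker
  rw [pow_succ, mul_mem_nonZeroDivisors] at hpow
  exact hpow.2
end

section
/- Let S and T be algebras over a field k, and suppose M is an (S,T)-bimodule that is faithful as a left S-module and finitely generated as a right T-module. Then for every finite subset 𝒮 ⊆ S there exist a finite subset 𝒯 ⊆ T and a constant K such that dim_k 𝒮⁽ⁿ⁾ ≤ K · dim_k 𝒯⁽ⁿ⁾ for all n, where 𝒳⁽ⁿ⁾ denotes the k-span of all products of at most n elements of 𝒳. -/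
/-!
Choose generators `m₁, …, m_r` of `M` over `T` and write `s • mᵢ = ∑ⱼ mⱼ c(s, i, j)`; let `𝒯` be
the set of the coefficients `c(s, i, j)` with `s ∈ 𝒮`. Induction on word length gives
`𝒮⁽ⁿ⁾ mᵢ ⊆ ∑ⱼ mⱼ 𝒯⁽ⁿ⁾`, and faithfulness makes `s ↦ (s mᵢ)ᵢ` injective, so
`dim 𝒮⁽ⁿ⁾ ≤ r · dim (∑ⱼ mⱼ 𝒯⁽ⁿ⁾) ≤ r² · dim 𝒯⁽ⁿ⁾`.
-/

open scoped ENNReal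

/-- The `k`-span of all products of at most `n` elements of `X`. -/
def wordSpan (k : Type*) [Field k] (S : Type*) [Ring S] [Algebra k S]
    (X : Set S) (n : ℕ) : Submodule k S :=
  Submodule.span k {x | ∃ l : List S, l.length ≤ n ∧ (∀ a ∈ l, a ∈ X) ∧ l.prod = x}

/-- The growth function `n ↦ dim_k 𝒳⁽ⁿ⁾` of a finite subset of an algebra. -/
noncomputable def growthFn (k : Type*) [Field k] (S : Type*) [Ring S] [Algebra k S]
    (X : Finset S) (n : ℕ) : ℕ :=
  Module.finrank k (wordSpan k S (X : Set S) n)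

/-- The growth relation `S ⪯ T`. -/
def growthLE (k : Type*) [Field k] (S T : Type*) [Ring S] [Algebra k S]
    [Ring T] [Algebra k T] : Prop :=
  ∀ X : Finset S, ∃ (Y : Finset T) (K : ℕ), 0 < K ∧
    ∀ n : ℕ, growthFn k S X n ≤ K * growthFn k T Y n

/-- Growth equivalence `S ≡ T`. -/
def growthEquiv (k : Type*) [Field k] (S T : Type*) [Ring S] [Algebra k S]
    [Ring T] [Algebra k T] : Prop :=
  growthLE k S T ∧ growthLE k T S

/-- The Gelfand–Kirillov dimension of a `k`-algebra. -/
noncomputable def gkDim (k : Type*) [Field k] (S : Type*) [Ring S] [Algebra k S] : ℝ≥0∞ :=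
  ⨆ X : Finset S, Filter.limsup
    (fun n : ℕ => ENNReal.ofReal (Real.log (growthFn k S X n) / Real.log n)) Filter.atTop

open Module Submodule

section WordSpan

variable {k A : Type*} [Field k] [Ring A] [Algebra k A]

lemma setOf_words_finite (X : Finset A) (n : ℕ) :
    {x : A | ∃ l : List A, l.length ≤ n ∧ (∀ a ∈ l, a ∈ (X : Set A)) ∧ l.prod = x}.Finite := by
  refine ((List.finite_length_le X n).image fun l => (l.map Subtype.val).prod).subset ?_
  rintro _ ⟨l, hlen, hl, rfl⟩
  lift l to List X using hl
  exact ⟨l, by simpa using hlen, rfl⟩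

instance (X : Finset A) (n : ℕ) : FiniteDimensional k (wordSpan k A X n) :=
  FiniteDimensional.span_of_finite k (setOf_words_finite X n)

lemma wordSpan_mono (X : Set A) : Monotone (wordSpan k A X) := fun _ _ h =>
  span_mono fun _ ⟨l, hlen, hl, hprod⟩ => ⟨l, hlen.trans h, hl, hprod⟩

lemma one_mem_wordSpan (X : Set A) (n : ℕ) : (1 : A) ∈ wordSpan k A X n :=
  subset_span ⟨[], by simp⟩

lemma mul_mem_wordSpan_succ {X : Set A} {x a : A} {n : ℕ} (hx : x ∈ X)
    (ha : a ∈ wordSpan k A X n) : x * a ∈ wordSpan k A X (n + 1) := by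
  induction ha using span_induction with
  | mem a ha =>
    obtain ⟨l, hlen, hl, rfl⟩ := ha
    exact subset_span ⟨x :: l, by simpa using hlen, by simpa [hx] using hl, rfl⟩
  | zero => simp
  | add a b _ _ iha ihb => simpa [mul_add] using add_mem iha ihb
  | smul c a _ ih => simpa using smul_mem _ c ih

lemma smul_mem_of_mem_wordSpan {M : Type*} [AddCommGroup M] [Module k M] [Module A M]
    [IsScalarTower k A M] {X : Set A} {W : ℕ → Submodule k M} (hW : Monotone W)
    (hX : ∀ x ∈ X, ∀ m, ∀ v ∈ W m, x • v ∈ W (m + 1)) {n : ℕ} {a : A}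
    (ha : a ∈ wordSpan k A X n) {v : M} (hv : v ∈ W 0) : a • v ∈ W n := by
  have hword : ∀ l : List A, (∀ x ∈ l, x ∈ X) → l.prod • v ∈ W l.length := by
    intro l hl
    induction l with
    | nil => simpa using hv
    | cons x l ih =>
      rw [List.prod_cons, mul_smul]
      exact hX x (hl x List.mem_cons_self) _ _ (ih fun y hy => hl y (List.mem_cons_of_mem x hy))
  induction ha using span_induction with
  | mem a ha =>
    obtain ⟨l, hlen, hl, rfl⟩ := ha
    exact hW hlen (hword l hl)
  | zero => simp
  | add a b _ _ iha ihb => simpa [add_smul] using add_mem iha ihb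
  | smul c a _ ih => simpa [smul_assoc] using smul_mem _ c ih

end WordSpan

lemma Submodule.finrank_le_card_mul_finrank_of_le_pi {k N ι : Type*} [Field k] [AddCommGroup N]
    [Module k N] [Fintype ι] {P : Submodule k (ι → N)} {W : Submodule k N} [FiniteDimensional k W]
    (hP : P ≤ pi Set.univ fun _ => W) : finrank k P ≤ Fintype.card ι * finrank k W := by
  rw [← W.range_subtype, ← LinearMap.range_compLeft] at hP
  calc finrank k P ≤ finrank k (LinearMap.range (W.subtype.compLeft ι)) := finrank_mono hP
    _ ≤ finrank k (ι → W) := LinearMap.finrank_range_le _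
    _ = Fintype.card ι * finrank k W := by simp [finrank_pi_fintype]

lemma injective_smul_family_of_span_eq_top {R S M ι : Type*} [Semiring R] [Ring S]
    [AddCommGroup M] [Module R M] [Module S M] [SMulCommClass S R M]
    (hfaith : ∀ s : S, (∀ x : M, s • x = 0) → s = 0) {g : ι → M}
    (hg : span R (Set.range g) = ⊤) : Function.Injective fun s : S => fun i => s • g i := by
  intro s s' h
  rw [← sub_eq_zero]
  have : DistribSMul.toLinearMap R M (s - s') = 0 :=
    LinearMap.ext_on_range hg fun i => by simp [sub_smul, congrFun h i]
  exact hfaith _ fun x => LinearMap.congr_fun this x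

section RightCombination

variable {k T M ι : Type*} [Field k] [Ring T] [Algebra k T] [AddCommGroup M] [Module k M]
  [Module Tᵐᵒᵖ M] [IsScalarTower k Tᵐᵒᵖ M] [Fintype ι]

variable (k T) in
/-- `t ↦ ∑ i, g i * t i` for the right `T`-module structure on `M`. -/
def rightCombination (g : ι → M) : (ι → T) →ₗ[k] M where
  toFun t := ∑ i, MulOpposite.op (t i) • g i
  map_add' t t' := by simp [add_smul, Finset.sum_add_distrib]
  map_smul' c t := by simp [Finset.smul_sum, smul_assoc]

lemma rightCombination_apply (g : ι → M) (t : ι → T) :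
    rightCombination k T g t = ∑ i, MulOpposite.op (t i) • g i := rfl

lemma rightCombination_surjective {g : ι → M} (hg : span Tᵐᵒᵖ (Set.range g) = ⊤) :
    Function.Surjective (rightCombination k T g) := by
  intro x
  have hx : x ∈ span Tᵐᵒᵖ (Set.range g) := hg ▸ mem_top
  obtain ⟨c, hc⟩ := (mem_span_range_iff_exists_fun Tᵐᵒᵖ).mp hx
  exact ⟨fun i => (c i).unop, by simpa [rightCombination_apply] using hc⟩

lemma rightCombination_single [DecidableEq ι] (g : ι → M) (i : ι) :
    rightCombination k T g (Pi.single i 1) = g i := by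
  simp [rightCombination_apply, Pi.single_apply, apply_ite MulOpposite.op, ite_smul]

lemma smul_rightCombination {S : Type*} [Monoid S] [DistribMulAction S M]
    [SMulCommClass S Tᵐᵒᵖ M] {g : ι → M} {s : S} {c : ι → ι → T}
    (hc : ∀ i, rightCombination k T g (c i) = s • g i) (t : ι → T) :
    s • rightCombination k T g t = rightCombination k T g fun j => ∑ i, c i j * t i := by
  simp only [rightCombination_apply, Finset.smul_sum, smul_comm s, ← hc, Finset.sum_smul,
    Finset.op_sum, MulOpposite.op_mul, mul_smul]
  exact Finset.sum_comm

end RightCombination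

section RightWordSpan

variable {k T M ι : Type*} [Field k] [Ring T] [Algebra k T] [AddCommGroup M] [Module k M]
  [Module Tᵐᵒᵖ M] [IsScalarTower k Tᵐᵒᵖ M] [Fintype ι]

variable (k) in
/-- `∑ i, g i * Y⁽ⁿ⁾`, where `M` is regarded as a right `T`-module. -/
def rightWordSpan (g : ι → M) (Y : Set T) (n : ℕ) : Submodule k M :=
  LinearMap.range (rightCombination k T g ∘ₗ (wordSpan k T Y n).subtype.compLeft ι)

lemma mem_rightWordSpan {g : ι → M} {Y : Set T} {n : ℕ} {v : M} :
    v ∈ rightWordSpan k g Y n ↔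
      ∃ t : ι → T, (∀ i, t i ∈ wordSpan k T Y n) ∧ rightCombination k T g t = v := by
  constructor
  · rintro ⟨t, rfl⟩
    exact ⟨fun i => t i, fun i => (t i).2, rfl⟩
  · rintro ⟨t, ht, rfl⟩
    exact ⟨fun i => ⟨t i, ht i⟩, rfl⟩

instance (g : ι → M) (Y : Finset T) (n : ℕ) :
    FiniteDimensional k (rightWordSpan k g (Y : Set T) n) :=
  LinearMap.finiteDimensional_range _

lemma finrank_rightWordSpan_le (g : ι → M) (Y : Finset T) (n : ℕ) :
    finrank k (rightWordSpan k g (Y : Set T) n) ≤ Fintype.card ι * growthFn k T Y n :=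
  (LinearMap.finrank_range_le _).trans_eq (by simp [finrank_pi_fintype, growthFn])

lemma rightWordSpan_mono (g : ι → M) (Y : Set T) : Monotone (rightWordSpan k g Y) :=
  fun _ _ h _ hv =>
    let ⟨t, ht, htv⟩ := mem_rightWordSpan.mp hv
    mem_rightWordSpan.mpr ⟨t, fun i => wordSpan_mono Y h (ht i), htv⟩

lemma mem_rightWordSpan_zero (g : ι → M) (Y : Set T) (i : ι) :
    g i ∈ rightWordSpan k g Y 0 := by
  classical
  refine mem_rightWordSpan.mpr ⟨Pi.single i 1, fun j => ?_, rightCombination_single g i⟩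
  rcases eq_or_ne j i with rfl | hj
  · simpa using one_mem_wordSpan Y 0
  · simp [hj]

lemma smul_mem_rightWordSpan_succ {S : Type*} [Monoid S] [DistribMulAction S M]
    [SMulCommClass S Tᵐᵒᵖ M] {g : ι → M} {Y : Set T} {s : S} {c : ι → ι → T}
    (hc : ∀ i, rightCombination k T g (c i) = s • g i) (hcY : ∀ i j, c i j ∈ Y) {m : ℕ} {v : M}
    (hv : v ∈ rightWordSpan k g Y m) : s • v ∈ rightWordSpan k g Y (m + 1) := by
  obtain ⟨t, ht, rfl⟩ := mem_rightWordSpan.mp hv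
  rw [smul_rightCombination hc]
  exact mem_rightWordSpan.mpr
    ⟨_, fun j => sum_mem fun i _ => mul_mem_wordSpan_succ (hcY i j) (ht i), rfl⟩

end RightWordSpan

/-- Lemma 2.1(a): if there is an `(S,T)`-bimodule, faithful over `S` and finitely
generated over `T`, then `S ⪯ T`. -/
theorem stmt7 (k : Type*) [Field k]
    (S T : Type*) [Ring S] [Algebra k S] [Ring T] [Algebra k T]
    (M : Type*) [AddCommGroup M] [Module k M]
    [Module S M] [IsScalarTower k S M]
    [Module Tᵐᵒᵖ M] [IsScalarTower k Tᵐᵒᵖ M]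
    [SMulCommClass S Tᵐᵒᵖ M]
    (hfaith : ∀ s : S, (∀ x : M, s • x = 0) → s = 0)
    [Module.Finite Tᵐᵒᵖ M]
    (X : Finset S) :
    ∃ (Y : Finset T) (K : ℕ), 0 < K ∧
      ∀ n : ℕ, growthFn k S X n ≤ K * growthFn k T Y n := by
  classical
  obtain ⟨r, g, hg⟩ := Module.Finite.exists_fin (R := Tᵐᵒᵖ) (M := M)
  choose c hc using fun (s : S) i => rightCombination_surjective (k := k) hg (s • g i)
  let Y : Finset T := (X ×ˢ Finset.univ ×ˢ Finset.univ).image fun p => c p.1 p.2.1 p.2.2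
  have hcY : ∀ s ∈ X, ∀ i j, c s i j ∈ Y := fun s hs i j =>
    Finset.mem_image.mpr ⟨(s, i, j), by simp [hs], rfl⟩
  let Φ : S →ₗ[k] (Fin r → M) :=
    LinearMap.pi fun i => (LinearMap.toSpanSingleton S M (g i)).restrictScalars k
  have hΦ : Function.Injective Φ := injective_smul_family_of_span_eq_top hfaith hg
  refine ⟨Y, r * r + 1, Nat.succ_pos _, fun n => ?_⟩
  let W := rightWordSpan k g (Y : Set T)
  have hXW : (wordSpan k S X n).map Φ ≤ pi Set.univ fun _ => W n := by
    rintro _ ⟨a, ha, rfl⟩ i -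
    exact smul_mem_of_mem_wordSpan (W := W) (rightWordSpan_mono g _)
      (fun s hs _ _ => smul_mem_rightWordSpan_succ (hc s) (hcY s hs)) ha
      (mem_rightWordSpan_zero g _ i)
  calc growthFn k S X n = finrank k ((wordSpan k S X n).map Φ) :=
        (equivMapOfInjective Φ hΦ _).finrank_eq
    _ ≤ r * finrank k (W n) := by
        simpa using finrank_le_card_mul_finrank_of_le_pi hXW
    _ ≤ r * (r * growthFn k T Y n) := by
        gcongr
        simpa using finrank_rightWordSpan_le g Y n
    _ ≤ (r * r + 1) * growthFn k T Y n := by nlinarith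
end

section
/- Let T ⊆ S be k-algebras with S finitely generated as a left or right T-module. Then S and T are growth equivalent: for every finite subset of either algebra there is a finite subset of the other dominating its growth function up to a multiplicative constant. In particular, GKdim S = GKdim T. -/
open scoped ENNReal

/-! Pick a finite set `E ∋ 1` spanning `S` as a `T`-module and let `Y ⊆ T` be the coefficients
expressing the products `e * x` (`e ∈ E`, `x ∈ X`) in terms of `E`. Then `M = span_k E` satisfies
`M · span X ≤ span Y · M`, so pushing `M` through a word gives `X⁽ⁿ⁾ ≤ M · X⁽ⁿ⁾ ≤ Y⁽ⁿ⁾ · M` and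
`dim X⁽ⁿ⁾ ≤ |E| · dim Y⁽ⁿ⁾`. The comparison `T ⪯ S` is inclusion, and a constant factor in the
growth function disappears in `log dim / log n`. -/

open Submodule Module Filter Topology

namespace Submodule

variable {k S : Type*} [Field k] [Ring S] [Algebra k S] (M N : Submodule k S)

instance finiteDimensional_mul [FiniteDimensional k M] [FiniteDimensional k N] :
    FiniteDimensional k ↥(M * N) :=
  mulMap_range M N ▸ inferInstance

theorem finrank_mul_le [FiniteDimensional k M] [FiniteDimensional k N] :
    finrank k ↥(M * N) ≤ finrank k M * finrank k N := by
  rw [← mulMap_range, ← Module.finrank_tensorProduct]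
  exact LinearMap.finrank_range_le _

end Submodule

section WordSpan

variable {k S : Type*} [Field k] [Ring S] [Algebra k S]

theorem finite_setOf_words {X : Set S} (hX : X.Finite) (n : ℕ) :
    {x : S | ∃ l : List S, l.length ≤ n ∧ (∀ a ∈ l, a ∈ X) ∧ l.prod = x}.Finite := by
  have := hX.to_subtype
  refine ((List.finite_length_le X n).image fun l => (l.map Subtype.val).prod).subset ?_
  rintro x ⟨l, hl, hlX, rfl⟩
  lift l to List X using hlX
  exact ⟨l, by simpa using hl, rfl⟩

instance (X : Set S) [Finite X] (n : ℕ) : FiniteDimensional k (wordSpan k S X n) :=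
  FiniteDimensional.span_of_finite k (finite_setOf_words (Set.toFinite X) n)

theorem wordSpan_mono_s8 {X : Set S} {m n : ℕ} (h : m ≤ n) : wordSpan k S X m ≤ wordSpan k S X n :=
  span_mono fun _ ⟨l, hl, hlX, hx⟩ => ⟨l, hl.trans h, hlX, hx⟩

theorem one_le_wordSpan (X : Set S) (n : ℕ) : 1 ≤ wordSpan k S X n :=
  one_le.2 <| subset_span ⟨[], Nat.zero_le n, by simp, rfl⟩

theorem span_mul_wordSpan_le (X : Set S) (n : ℕ) :
    span k X * wordSpan k S X n ≤ wordSpan k S X (n + 1) := by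
  rw [wordSpan, span_mul_span]
  refine span_mono ?_
  rintro _ ⟨x, hx, _, ⟨l, hl, hlX, rfl⟩, rfl⟩
  exact ⟨x :: l, by simpa using hl, by simpa [hx] using hlX, List.prod_cons⟩

theorem Subalgebra.map_wordSpan (T : Subalgebra k S) (Y : Set T) (n : ℕ) :
    (wordSpan k T Y n).map T.val.toLinearMap = wordSpan k S (Subtype.val '' Y) n := by
  rw [wordSpan, map_span, wordSpan]
  congr 1
  ext x
  constructor
  · rintro ⟨_, ⟨l, hl, hlY, rfl⟩, rfl⟩
    refine ⟨l.map Subtype.val, by simpa using hl, fun a ha => ?_, (map_list_prod T.val l).symm⟩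
    obtain ⟨b, hb, rfl⟩ := List.mem_map.1 ha
    exact ⟨b, hlY b hb, rfl⟩
  · rintro ⟨l, hl, hlY, rfl⟩
    lift l to List T using fun a ha => by obtain ⟨b, -, rfl⟩ := hlY a ha; exact b.2
    refine ⟨l.prod, ⟨l, by simpa using hl, fun a ha => ?_, rfl⟩, map_list_prod T.val l⟩
    exact Subtype.val_injective.mem_set_image.1 (hlY a (List.mem_map_of_mem ha))

theorem Subalgebra.finrank_wordSpan (T : Subalgebra k S) (Y : Set T) (n : ℕ) :
    finrank k (wordSpan k T Y n) = finrank k (wordSpan k S (Subtype.val '' Y) n) := by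
  rw [← Subalgebra.map_wordSpan]
  exact LinearEquiv.finrank_eq (Submodule.equivMapOfInjective _ Subtype.val_injective _)

theorem mul_span_prod_le_wordSpan_mul {X Y : Set S} {M : Submodule k S} (hM : 1 ∈ M)
    (h : M * span k X ≤ span k Y * M) :
    ∀ l : List S, (∀ a ∈ l, a ∈ X) → M * span k {l.prod} ≤ wordSpan k S Y l.length * M
  | [], _ => by
    rw [List.prod_nil, ← one_eq_span, mul_one]
    exact le_mul_of_one_le_left' (one_le_wordSpan Y 0)
  | x :: l, hl => calc
    M * span k {(x :: l).prod} = M * span k {x} * span k {l.prod} := by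
      rw [List.prod_cons, mul_assoc, span_mul_span, Set.singleton_mul_singleton]
    _ ≤ span k Y * M * span k {l.prod} := by
      refine mul_le_mul_left (le_trans (mul_le_mul_right ?_ M) h) _
      exact span_mono (Set.singleton_subset_iff.2 (hl x List.mem_cons_self))
    _ ≤ span k Y * (wordSpan k S Y l.length * M) := by
      rw [mul_assoc]
      exact mul_le_mul_right (mul_span_prod_le_wordSpan_mul hM h l
        fun a ha => hl a (List.mem_cons_of_mem x ha)) _
    _ ≤ wordSpan k S Y (x :: l).length * M := by
      rw [← mul_assoc]
      exact mul_le_mul_left (span_mul_wordSpan_le Y l.length) M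

theorem wordSpan_le_mul_of_mul_le {X Y : Set S} {M : Submodule k S} (hM : 1 ∈ M)
    (h : M * span k X ≤ span k Y * M) (n : ℕ) : wordSpan k S X n ≤ wordSpan k S Y n * M := by
  refine span_le.2 ?_
  rintro _ ⟨l, hl, hlX, rfl⟩
  have hl' : l.prod ∈ M * span k {l.prod} := by
    simpa using mul_mem_mul hM (mem_span_singleton_self l.prod)
  exact mul_le_mul_left (wordSpan_mono_s8 hl) M (mul_span_prod_le_wordSpan_mul hM h l hlX hl')

theorem finrank_wordSpan_le_of_mul_le {X Y : Set S} [Finite Y] {M : Submodule k S}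
    [FiniteDimensional k M] (hM : 1 ∈ M) (h : M * span k X ≤ span k Y * M) (n : ℕ) :
    finrank k (wordSpan k S X n) ≤ finrank k (wordSpan k S Y n) * finrank k M :=
  (Submodule.finrank_mono (wordSpan_le_mul_of_mul_le hM h n)).trans (finrank_mul_le _ _)

end WordSpan

section Growth

variable {k S : Type*} [Field k] [Ring S] [Algebra k S]

theorem growthLE_subalgebra (T : Subalgebra k S) : growthLE k T S := fun Y =>
  ⟨Y.map (.subtype (· ∈ T)), 1, one_pos, fun n => by
    rw [one_mul, growthFn, growthFn, Finset.coe_map, Function.Embedding.coe_subtype,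
      T.finrank_wordSpan]⟩

theorem Subalgebra.exists_finset_mul_span_le (T : Subalgebra k S) [Module.Finite T S]
    (X : Finset S) :
    ∃ (E : Finset S) (Y : Finset T), 1 ∈ E ∧
      span k E * span k X ≤ span k (Subtype.val '' (Y : Set T)) * span k E := by
  classical
  obtain ⟨E₀, hE₀⟩ := Module.Finite.fg_top (R := T) (M := S)
  set E := insert 1 E₀
  have hE : ∀ s : S, s ∈ span T (E : Set S) := fun s =>
    span_mono (Finset.coe_subset.2 (Finset.subset_insert 1 E₀)) (hE₀ ▸ mem_top)
  choose c hc using fun e x : S => (mem_span_finset.1 (hE (e * x))).imp fun _ h => h.2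
  refine ⟨E, (E ×ˢ X ×ˢ E).image fun p => c p.1 p.2.1 p.2.2, Finset.mem_insert_self 1 E₀, ?_⟩
  rw [span_mul_span]
  refine span_le.2 ?_
  rintro _ ⟨e, he, x, hx, rfl⟩
  change e * x ∈ _
  rw [← hc e x]
  refine sum_mem fun i hi => mul_mem_mul (subset_span ⟨c e x i, ?_, rfl⟩) (subset_span hi)
  exact Finset.mem_image.2 ⟨(e, x, i), by simp_all, rfl⟩

theorem growthLE_of_moduleFinite (T : Subalgebra k S) [Module.Finite T S] : growthLE k S T := by
  intro X
  obtain ⟨E, Y, hE, hmul⟩ := T.exists_finset_mul_span_le X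
  refine ⟨Y, E.card, Finset.card_pos.2 ⟨1, hE⟩, fun n => ?_⟩
  calc growthFn k S X n
      ≤ finrank k (wordSpan k S (Subtype.val '' (Y : Set T)) n) * finrank k (span k (E : Set S)) :=
        finrank_wordSpan_le_of_mul_le (subset_span hE) hmul n
    _ ≤ E.card * growthFn k T Y n := by
        rw [growthFn, T.finrank_wordSpan, mul_comm]
        gcongr
        exact finrank_span_finset_le_card E

end Growth

theorem Real.log_natCast_le_log_add_log_of_le_mul {a b K : ℕ} (hK : 0 < K) (h : a ≤ K * b) :
    Real.log a ≤ Real.log K + Real.log b := by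
  rcases Nat.eq_zero_or_pos a with rfl | ha
  · simpa using add_nonneg (Real.log_natCast_nonneg K) (Real.log_natCast_nonneg b)
  have hb : 0 < b := Nat.pos_of_mul_pos_left (ha.trans_le h)
  rw [← Real.log_mul (by positivity) (by positivity)]
  exact Real.log_le_log (by positivity) (by exact_mod_cast h)

theorem gkDim_mono {k S T : Type*} [Field k] [Ring S] [Algebra k S] [Ring T] [Algebra k T]
    (h : growthLE k S T) : gkDim k S ≤ gkDim k T := by
  refine iSup_le fun X => ?_
  obtain ⟨Y, K, hK, hXY⟩ := h X
  refine le_iSup_of_le Y ?_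
  set rate : ℕ → ℕ → ℝ≥0∞ := fun a n => ENNReal.ofReal (Real.log a / Real.log n)
  have hK0 : Tendsto (rate K) atTop (𝓝 0) := by
    simpa using ENNReal.tendsto_ofReal <| tendsto_const_nhds.div_atTop
      (Real.tendsto_log_atTop.comp tendsto_natCast_atTop_atTop)
  have hle : ∀ n, rate (growthFn k S X n) n ≤ rate K n + rate (growthFn k T Y n) n := fun n =>
    calc rate (growthFn k S X n) n
        ≤ ENNReal.ofReal (Real.log K / Real.log n + Real.log (growthFn k T Y n) / Real.log n) := by
          rw [← add_div]
          exact ENNReal.ofReal_le_ofReal <| div_le_div_of_nonneg_right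
            (Real.log_natCast_le_log_add_log_of_le_mul hK (hXY n)) (Real.log_natCast_nonneg n)
      _ ≤ rate K n + rate (growthFn k T Y n) n := ENNReal.ofReal_add_le
  calc limsup (fun n => rate (growthFn k S X n) n) atTop
      ≤ limsup (rate K + fun n => rate (growthFn k T Y n) n) atTop :=
        limsup_le_limsup (.of_forall hle)
    _ = limsup (fun n => rate (growthFn k T Y n) n) atTop :=
        ENNReal.limsup_add_of_left_tendsto_zero hK0 _

/-- Lemma 2.1(b): a `k`-algebra is growth equivalent to any subalgebra over which it is
module-finite; in particular they have the same GK dimension. -/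
theorem stmt8 (k : Type*) [Field k] (S : Type*) [Ring S] [Algebra k S]
    (T : Subalgebra k S) (hfin : Module.Finite T S) :
    growthEquiv k S T ∧ gkDim k S = gkDim k T := by
  have hST : growthLE k S T := growthLE_of_moduleFinite T
  have hTS : growthLE k T S := growthLE_subalgebra T
  exact ⟨⟨hST, hTS⟩, (gkDim_mono hST).antisymm (gkDim_mono hTS)⟩
end

section
/- Let S be a k-algebra and 𝒞 ⊆ Z(S) a multiplicative set of central regular elements. Then the central localization S[𝒞⁻¹] is growth equivalent to S. -/
open scoped ENNReal

/-!
Since `S` embeds into `L`, every finite subset of `S` grows in `L` exactly as in `S`.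
Conversely, a finite `Y ⊆ L` has a common denominator `c ∈ C`, and `f c` is central in `L`.
Hence for a word `y₁ ⋯ yₘ` with `m ≤ n`, the product `y₁ ⋯ yₘ · (f c)ⁿ` is the word
`(y₁ f c) ⋯ (yₘ f c) · (f c)ⁿ⁻ᵐ` of length `n` in the image of the finite set
`X = {c} ∪ {numerators}`. Right multiplication by the unit `(f c)ⁿ` is injective, so
`dim Y⁽ⁿ⁾ ≤ dim X⁽ⁿ⁾`.
-/

theorem List.prod_mul_pow_length {M : Type*} [Monoid M] {u : M} :
    ∀ l : List M, (∀ a ∈ l, Commute a u) → l.prod * u ^ l.length = (l.map (· * u)).prod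
  | [], _ => by simp
  | a :: l, h => by
    rw [List.forall_mem_cons] at h
    have hl : Commute l.prod u := Commute.list_prod_left _ _ h.2
    calc (a :: l).prod * u ^ (a :: l).length = a * u * (l.prod * u ^ l.length) := by
          rw [List.prod_cons, List.length_cons, pow_succ', mul_assoc a u, ← mul_assoc u,
            ← hl.eq]
          simp only [mul_assoc]
      _ = ((a :: l).map (· * u)).prod := by
          rw [List.prod_mul_pow_length l h.2, List.map_cons, List.prod_cons]

theorem finite_setOf_list_prod_of_length_le {M : Type*} [Monoid M] (X : Set M) (hX : X.Finite)
    (n : ℕ) :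
    {x : M | ∃ l : List M, l.length ≤ n ∧ (∀ a ∈ l, a ∈ X) ∧ l.prod = x}.Finite := by
  have : Finite X := hX
  refine ((List.finite_length_le X n).image fun l => (l.map (↑)).prod).subset ?_
  rintro x ⟨l, hlen, hmem, rfl⟩
  exact ⟨l.pmap Subtype.mk hmem, by simpa using hlen, by simp [List.map_pmap]⟩

section WordSpan

variable {k : Type*} [Field k] {A : Type*} [Ring A] [Algebra k A]

theorem finiteDimensional_wordSpan (X : Finset A) (n : ℕ) :
    FiniteDimensional k (wordSpan k A X n) :=
  FiniteDimensional.span_of_finite k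
    (finite_setOf_list_prod_of_length_le _ X.finite_toSet n)

theorem mul_pow_mem_wordSpan {Y Z : Set A} {u : A} (hcomm : ∀ y ∈ Y, Commute y u)
    (hYu : ∀ y ∈ Y, y * u ∈ Z) (huZ : u ∈ Z) {n : ℕ} {x : A}
    (hx : x ∈ wordSpan k A Y n) :
    x * u ^ n ∈ wordSpan k A Z n := by
  induction hx using Submodule.span_induction with
  | mem x hx =>
    obtain ⟨l, hlen, hmem, rfl⟩ := hx
    refine Submodule.subset_span ⟨l.map (· * u) ++ List.replicate (n - l.length) u,
      by simp [Nat.add_sub_cancel' hlen], ?_, ?_⟩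
    · simp only [List.mem_append, List.mem_map, List.mem_replicate]
      rintro a (⟨y, hy, rfl⟩ | ⟨-, rfl⟩)
      exacts [hYu y (hmem y hy), huZ]
    · rw [List.prod_append, ← List.prod_mul_pow_length l fun y hy => hcomm y (hmem y hy),
        List.prod_replicate, mul_assoc, ← pow_add, Nat.add_sub_cancel' hlen]
  | zero => simp
  | add x y _ _ hx hy => rw [add_mul]; exact add_mem hx hy
  | smul a x _ hx => rw [smul_mul_assoc]; exact Submodule.smul_mem _ a hx

theorem growthFn_le_of_mul_pow_mem {Y Z : Finset A} {u : A} (hu : IsRightRegular u)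
    (hcomm : ∀ y ∈ Y, Commute y u) (hYu : ∀ y ∈ Y, y * u ∈ Z) (huZ : u ∈ Z) (n : ℕ) :
    growthFn k A Y n ≤ growthFn k A Z n := by
  have := finiteDimensional_wordSpan (k := k) Z n
  let g := (LinearMap.mulRight k (u ^ n)).restrict (p := wordSpan k A Y n)
    (q := wordSpan k A Z n) fun _ hx => mul_pow_mem_wordSpan hcomm hYu huZ hx
  refine LinearMap.finrank_le_finrank_of_injective (f := g) fun x y hxy => ?_
  exact Subtype.ext ((hu.pow n) (congrArg Subtype.val hxy))

end WordSpan

section AlgHom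

variable {k : Type*} [Field k] {S : Type*} [Ring S] [Algebra k S]
  {L : Type*} [Ring L] [Algebra k L]

theorem wordSpan_map (f : S →ₐ[k] L) (X : Set S) (n : ℕ) :
    (wordSpan k S X n).map f.toLinearMap = wordSpan k L (f '' X) n := by
  rw [wordSpan, wordSpan, Submodule.map_span]
  congr 1
  ext x
  constructor
  · rintro ⟨-, ⟨l, hlen, hmem, rfl⟩, rfl⟩
    refine ⟨l.map f, by simpa using hlen, ?_, (map_list_prod f l).symm⟩
    simp only [List.mem_map]
    rintro _ ⟨a, ha, rfl⟩
    exact ⟨a, hmem a ha, rfl⟩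
  · rintro ⟨l, hlen, hmem, rfl⟩
    refine ⟨(l.map (Function.invFunOn f X)).prod,
      ⟨_, by simpa using hlen, ?_, rfl⟩, ?_⟩
    · simp only [List.mem_map]
      rintro _ ⟨b, hb, rfl⟩
      exact Function.invFunOn_mem (hmem b hb)
    · rw [AlgHom.toLinearMap_apply, map_list_prod, List.map_map]
      congr 1
      exact (List.map_congr_left fun b hb => Function.invFunOn_eq (hmem b hb)).trans l.map_id'

theorem growthFn_image_of_injective [DecidableEq L] (f : S →ₐ[k] L) (hf : Function.Injective f)
    (X : Finset S) (n : ℕ) :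
    growthFn k L (X.image f) n = growthFn k S X n := by
  rw [growthFn, growthFn, Finset.coe_image, ← wordSpan_map]
  exact (Submodule.equivMapOfInjective f.toLinearMap hf _).finrank_eq.symm

theorem growthLE_of_injective (f : S →ₐ[k] L) (hf : Function.Injective f) :
    growthLE k S L := by
  classical
  exact fun X => ⟨X.image f, 1, one_pos, fun n => by
    rw [one_mul, growthFn_image_of_injective f hf]⟩

theorem growthLE_of_exists_common_denominator (f : S →ₐ[k] L) (hf : Function.Injective f)
    (hden : ∀ Y : Finset L, ∃ c : S, IsRightRegular (f c) ∧ (∀ y ∈ Y, Commute y (f c)) ∧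
      ∀ y ∈ Y, ∃ s, y * f c = f s) :
    growthLE k L S := by
  classical
  intro Y
  obtain ⟨c, hreg, hcomm, hnum⟩ := hden Y
  choose! s hs using hnum
  refine ⟨insert c (Y.image s), 1, one_pos, fun n => ?_⟩
  rw [one_mul, ← growthFn_image_of_injective f hf]
  refine growthFn_le_of_mul_pow_mem hreg hcomm (fun y hy => ?_) ?_ n
  · rw [hs y hy]
    exact Finset.mem_image_of_mem f (Finset.mem_insert_of_mem (Finset.mem_image_of_mem s hy))
  · exact Finset.mem_image_of_mem f (Finset.mem_insert_self c _)

end AlgHom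

section Localization

variable {S L F : Type*} [Ring S] [Ring L] [FunLike F S L] [RingHomClass F S L] (f : F)
  (C : Submonoid S)

theorem commute_map_of_mem_center (hunit : ∀ c ∈ C, IsUnit (f c))
    (hfrac : ∀ y : L, ∃ s : S, ∃ c ∈ C, y * f c = f s) {c : S} (hc : c ∈ Set.center S)
    (z : L) : Commute z (f c) := by
  obtain ⟨s, d, hd, hz⟩ := hfrac z
  refine (hunit d hd).mul_right_cancel ?_
  calc z * f c * f d = z * f d * f c := by
        rw [mul_assoc, ← map_mul, hc.comm d, map_mul, mul_assoc]
    _ = f c * z * f d := by rw [hz, ← map_mul, ← hc.comm s, map_mul, mul_assoc, hz]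

theorem exists_common_denominator (hcen : (C : Set S) ⊆ Set.center S)
    (hfrac : ∀ y : L, ∃ s : S, ∃ c ∈ C, y * f c = f s) (Y : Finset L) :
    ∃ c ∈ C, ∀ y ∈ Y, ∃ s, y * f c = f s := by
  classical
  induction Y using Finset.induction_on with
  | empty => exact ⟨1, one_mem C, by simp⟩
  | insert y Y _ ih =>
    obtain ⟨c, hc, hY⟩ := ih
    obtain ⟨s, d, hd, hy⟩ := hfrac y
    refine ⟨c * d, mul_mem hc hd,
      (Finset.forall_mem_insert _ _ _).2 ⟨?_, fun y' hy' => ?_⟩⟩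
    · exact ⟨s * c, by rw [(hcen hc).comm d, map_mul, ← mul_assoc, hy, map_mul]⟩
    · obtain ⟨s', hs'⟩ := hY y' hy'
      exact ⟨s' * d, by rw [map_mul, ← mul_assoc, hs', map_mul]⟩

end Localization

theorem stmt14_general (k : Type*) [Field k] (S : Type*) [Ring S] [Algebra k S]
    (C : Submonoid S) (hcen : (C : Set S) ⊆ Set.center S)
    (L : Type*) [Ring L] [Algebra k L]
    (f : S →ₐ[k] L) (hinj : Function.Injective f)
    (hunit : ∀ c ∈ C, IsUnit (f c))
    (hfrac : ∀ y : L, ∃ s : S, ∃ c ∈ C, y * f c = f s) :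
    growthEquiv k S L := by
  refine ⟨growthLE_of_injective f hinj,
    growthLE_of_exists_common_denominator f hinj fun Y => ?_⟩
  obtain ⟨c, hc, hden⟩ := exists_common_denominator f C hcen hfrac Y
  exact ⟨c, (hunit c hc).isRegular.right,
    fun y _ => commute_map_of_mem_center f C hunit hfrac (hcen hc) y, hden⟩

/-- A central localization of `S` at a multiplicative set of central regular elements is
growth equivalent to `S`. -/
theorem stmt14 (k : Type*) [Field k] (S : Type*) [Ring S] [Algebra k S]
    (C : Submonoid S) (hcen : (C : Set S) ⊆ Set.center S)
    (hreg : (C : Set S) ⊆ nonZeroDivisors S)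
    (L : Type*) [Ring L] [Algebra k L]
    (f : S →ₐ[k] L) (hinj : Function.Injective f)
    (hunit : ∀ c ∈ C, IsUnit (f c))
    (hfrac : ∀ y : L, ∃ s : S, ∃ c ∈ C, y * f c = f s) :
    growthEquiv k S L :=
  stmt14_general k S C hcen L f hinj hunit hfrac
end
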